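/- arXiv:1306.1356 — 3 statements merged into one kernel-verified Lean document; each statement's English description precedes it below -/
import Mathlib

section
/- Let M be an m×d real matrix and x ∈ ℝ^d. Define the tangent cone T(x) = cone{z − x : z ∈ ℝ^d, ‖Ωz‖₁ ≤ ‖Ωx‖₁} for a matrix Ω ∈ ℝ^{p×d}. Then x is the unique minimizer of ‖Ωz‖₁ subject to Mz = Mx if and only if ker M ∩ T(x) = {0}. -/
noncomputable section

def l1 {n : ℕ} (v : Fin n → ℝ) : ℝ := ∑ i, |v i|

def mulVec' {m d : ℕ} (M : Fin m → Fin d → ℝ) (x : Fin d → ℝ) : Fin m → ℝ :=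
  fun i => ∑ j, M i j * x j

/-- Conic hull: all finite nonnegative combinations of elements of `S`. -/
def coneHull {d : ℕ} (S : Set (Fin d → ℝ)) : Set (Fin d → ℝ) :=
  {v | ∃ (k : ℕ) (t : Fin k → ℝ) (z : Fin k → (Fin d → ℝ)),
    (∀ i, 0 ≤ t i) ∧ (∀ i, z i ∈ S) ∧ v = ∑ i, t i • z i}

/-- Tangent cone of the analysis ℓ¹ ball at `x`. -/
def tangentCone {p d : ℕ} (Ω : Fin p → Fin d → ℝ) (x : Fin d → ℝ) : Set (Fin d → ℝ) :=
  coneHull {w | ∃ z : Fin d → ℝ, l1 (mulVec' Ω z) ≤ l1 (mulVec' Ω x) ∧ w = z - x}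

lemma mulVec'_sub {m d : ℕ} (M : Fin m → Fin d → ℝ) (a b : Fin d → ℝ) :
    mulVec' M (a - b) = mulVec' M a - mulVec' M b := by
  funext i
  simp [mulVec', mul_sub, Finset.sum_sub_distrib]

lemma mulVec'_add {m d : ℕ} (M : Fin m → Fin d → ℝ) (a b : Fin d → ℝ) :
    mulVec' M (a + b) = mulVec' M a + mulVec' M b := by
  funext i
  simp [mulVec', mul_add, Finset.sum_add_distrib]

lemma mulVec'_smul {m d : ℕ} (M : Fin m → Fin d → ℝ) (c : ℝ) (a : Fin d → ℝ) :
    mulVec' M (c • a) = c • mulVec' M a := by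
  funext i
  simp only [mulVec', Pi.smul_apply, smul_eq_mul, Finset.mul_sum]
  exact Finset.sum_congr rfl fun j _ => by ring

lemma mulVec'_sum {m d k : ℕ} (M : Fin m → Fin d → ℝ) (z : Fin k → (Fin d → ℝ)) :
    mulVec' M (∑ i, z i) = ∑ i, mulVec' M (z i) := by
  funext i
  simp only [mulVec', Finset.sum_apply, Finset.mul_sum]
  rw [Finset.sum_comm]

lemma l1_smul {n : ℕ} (c : ℝ) (hc : 0 ≤ c) (v : Fin n → ℝ) : l1 (c • v) = c * l1 v := by
  simp [l1, Finset.mul_sum, abs_mul, abs_of_nonneg hc]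

lemma l1_sum_le {n k : ℕ} (v : Fin k → (Fin n → ℝ)) :
    l1 (∑ i, v i) ≤ ∑ i, l1 (v i) := by
  unfold l1
  rw [Finset.sum_comm]
  apply Finset.sum_le_sum
  intro j _
  simp only [Finset.sum_apply]
  exact Finset.abs_sum_le_sum_abs _ _

theorem recovery_via_tangent_cones {m d p : ℕ}
    (M : Fin m → Fin d → ℝ) (Ω : Fin p → Fin d → ℝ) (x : Fin d → ℝ) :
    (∀ z : Fin d → ℝ, mulVec' M z = mulVec' M x → l1 (mulVec' Ω z) ≤ l1 (mulVec' Ω x) → z = x)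
      ↔ {v | mulVec' M v = 0} ∩ tangentCone Ω x = {0} := by
  constructor
  · intro h
    ext v
    simp only [Set.mem_inter_iff, Set.mem_setOf_eq, Set.mem_singleton_iff]
    constructor
    · rintro ⟨hker, k, t, w, ht, hw, hv⟩
      choose z hz hzw using hw
      set T : ℝ := ∑ i, t i with hT
      have hT0 : 0 ≤ T := Finset.sum_nonneg fun i _ => ht i
      rcases eq_or_lt_of_le hT0 with hTz | hTpos
      · -- all t i = 0
        have : ∀ i ∈ Finset.univ, t i = 0 := by
          intro i _
          have := Finset.sum_eq_zero_iff_of_nonneg (fun i _ => ht i) |>.mp hTz.symm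
          exact this i (Finset.mem_univ i)
        rw [hv]
        apply Finset.sum_eq_zero
        intro i hi
        rw [this i hi, zero_smul]
      · -- y = ∑ (t i / T) • z i
        set y : Fin d → ℝ := ∑ i, (t i / T) • z i with hy
        have hsum1 : ∑ i, t i / T = 1 := by
          rw [← Finset.sum_div, ← hT, div_self (ne_of_gt hTpos)]
        have hyx : y = x + T⁻¹ • v := by
          rw [hv, hy]
          have : ∀ i, (t i / T) • z i = (t i / T) • x + T⁻¹ • (t i • (w i)) := by
            intro i
            rw [hzw i]
            rw [smul_smul, smul_sub]
            rw [div_eq_mul_inv, mul_comm (t i)]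
            module
          simp_rw [this]
          rw [Finset.sum_add_distrib, ← Finset.sum_smul, hsum1, one_smul, ← Finset.smul_sum]
        have hMy : mulVec' M y = mulVec' M x := by
          rw [hyx, mulVec'_add, mulVec'_smul, hker, smul_zero, add_zero]
        have hly : l1 (mulVec' Ω y) ≤ l1 (mulVec' Ω x) := by
          have h1 : mulVec' Ω y = ∑ i, (t i / T) • mulVec' Ω (z i) := by
            rw [hy]
            rw [show (∑ i, (t i / T) • z i) = ∑ i, ((t i / T) • z i) from rfl]
            rw [mulVec'_sum]
            congr 1
            funext i
            exact mulVec'_smul Ω _ _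
          rw [h1]
          calc l1 (∑ i, (t i / T) • mulVec' Ω (z i))
              ≤ ∑ i, l1 ((t i / T) • mulVec' Ω (z i)) := l1_sum_le _
            _ = ∑ i, (t i / T) * l1 (mulVec' Ω (z i)) := by
                apply Finset.sum_congr rfl
                intro i _
                exact l1_smul _ (div_nonneg (ht i) hT0) _
            _ ≤ ∑ i, (t i / T) * l1 (mulVec' Ω x) := by
                apply Finset.sum_le_sum
                intro i _
                exact mul_le_mul_of_nonneg_left (hz i) (div_nonneg (ht i) hT0)
            _ = l1 (mulVec' Ω x) := by rw [← Finset.sum_mul, hsum1, one_mul]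
        have := h y hMy hly
        rw [hyx] at this
        have hv0 : T⁻¹ • v = 0 := by
          rwa [add_eq_left] at this
        have : v = T • (T⁻¹ • v) := by
          rw [smul_smul, mul_inv_cancel₀ (ne_of_gt hTpos), one_smul]
        rw [this, hv0, smul_zero]
    · rintro rfl
      refine ⟨?_, 0, fun i => 0, Fin.elim0, fun i => i.elim0, fun i => i.elim0, by simp⟩
      funext i
      simp [mulVec']
  · intro h z hMz hl1
    have hmem : z - x ∈ {v | mulVec' M v = 0} ∩ tangentCone Ω x := by
      constructor
      · show mulVec' M (z - x) = 0
        rw [mulVec'_sub, hMz, sub_self]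
      · exact ⟨1, fun _ => 1, fun _ => z - x, fun i => zero_le_one,
          fun i => ⟨z, hl1, rfl⟩, by simp⟩
    rw [h] at hmem
    exact sub_eq_zero.mp hmem
end
end

section
/- Let g be a standard normal random variable and t > 0. Then E[S_t(g)²] ≤ e^{−t²/2}, where S_t is the soft-thresholding operator defined by S_t(x) = x + t for x < −t, S_t(x) = 0 for −t ≤ x ≤ t, and S_t(x) = x − t for x > t. -/
/-! If `S_t(x) ≠ 0` then `|x| = |S_t(x)| + t`, so `x² ≥ S_t(x)² + t²` and the Gaussian density
satisfies `φ(x) ≤ e^{-t²/2} φ(S_t(x))`. Hence `E[S_t(g)²] ≤ e^{-t²/2} ∫ S_t(x)² φ(S_t(x)) dx`, and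
this last integral is `∫ y² φ(y) dy = Var[g] = 1`, because `S_t` is a translation on each of
`(t, ∞)` and `(-∞, -t)`, onto `(0, ∞)` and `(-∞, 0)`. -/

open MeasureTheory ProbabilityTheory

noncomputable section

/-- Soft-thresholding operator. -/
def softThreshold (t x : ℝ) : ℝ :=
  if x < -t then x + t else if x ≤ t then 0 else x - t

open Real Set
open scoped NNReal

section

variable {t : ℝ}

lemma sq_softThreshold_add_sq_le (ht : 0 ≤ t) {x : ℝ} (hx : softThreshold t x ≠ 0) :
    softThreshold t x ^ 2 + t ^ 2 ≤ x ^ 2 := by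
  unfold softThreshold at *
  split_ifs at * <;> first | exact absurd rfl hx | nlinarith

lemma comp_softThreshold_eq_indicator {E : Type*} [AddZeroClass E] {f : ℝ → E} (ht : 0 ≤ t)
    (hf : f 0 = 0) (x : ℝ) :
    f (softThreshold t x) = (Ioi 0).indicator f (x - t) + (Iio 0).indicator f (x + t) := by
  unfold softThreshold
  split_ifs
  · simp [indicator, show ¬ 0 < x - t by linarith, show x + t < 0 by linarith]
  · simp [indicator, hf, show ¬ 0 < x - t by linarith, show ¬ x + t < 0 by linarith]
  · simp [indicator, show 0 < x - t by linarith, show ¬ x + t < 0 by linarith]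

variable {E : Type*} [NormedAddCommGroup E] {μ : Measure ℝ} [μ.IsAddRightInvariant] {f : ℝ → E}

lemma MeasureTheory.Integrable.comp_softThreshold (ht : 0 ≤ t) (hf : Integrable f μ)
    (hf0 : f 0 = 0) : Integrable (fun x ↦ f (softThreshold t x)) μ := by
  simp_rw [comp_softThreshold_eq_indicator ht hf0]
  exact ((hf.indicator measurableSet_Ioi).comp_sub_right t).add
    ((hf.indicator measurableSet_Iio).comp_add_right t)

lemma integral_comp_softThreshold [NormedSpace ℝ E] (ht : 0 ≤ t) (hf : Integrable f μ)
    (hf0 : f 0 = 0) : ∫ x, f (softThreshold t x) ∂μ = ∫ x, f x ∂μ := by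
  simp_rw [comp_softThreshold_eq_indicator ht hf0]
  rw [integral_add ((hf.indicator measurableSet_Ioi).comp_sub_right t)
      ((hf.indicator measurableSet_Iio).comp_add_right t),
    integral_sub_right_eq_self, integral_add_right_eq_self,
    ← integral_add (hf.indicator measurableSet_Ioi) (hf.indicator measurableSet_Iio)]
  congr with y
  rcases lt_trichotomy y 0 with hy | rfl | hy
  · simp [indicator, hy, hy.asymm]
  · simp [hf0]
  · simp [indicator, hy, hy.asymm]

lemma gaussianPDFReal_mul_sq_softThreshold_le (ht : 0 ≤ t) (v : ℝ≥0) (x : ℝ) :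
    gaussianPDFReal 0 v x * softThreshold t x ^ 2 ≤
      exp (-t ^ 2 / (2 * v)) *
        (gaussianPDFReal 0 v (softThreshold t x) * softThreshold t x ^ 2) := by
  by_cases hx : softThreshold t x = 0
  · simp [hx]
  have hsq := sq_softThreshold_add_sq_le ht hx
  rw [← mul_assoc]
  gcongr
  simp only [gaussianPDFReal, sub_zero]
  rw [mul_left_comm, ← exp_add, ← add_div]
  gcongr
  linarith

end

lemma integrable_gaussianPDFReal_mul_sq {v : ℝ≥0} (hv : v ≠ 0) :
    Integrable (fun x ↦ gaussianPDFReal 0 v x * x ^ 2) := by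
  have h := (memLp_id_gaussianReal (μ := 0) (v := v) 2).integrable_sq
  rw [gaussianReal_of_var_ne_zero _ hv, integrable_withDensity_iff_integrable_smul'
    (measurable_gaussianPDF 0 v) (.of_forall fun _ ↦ gaussianPDF_lt_top)] at h
  simpa only [toReal_gaussianPDF, id, smul_eq_mul] using h

lemma integral_gaussianPDFReal_mul_sq {v : ℝ≥0} (hv : v ≠ 0) :
    ∫ x, gaussianPDFReal 0 v x * x ^ 2 = v := by
  change ∫ x, gaussianPDFReal 0 v x • x ^ 2 = v
  rw [← integral_gaussianReal_eq_integral_smul hv,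
    ← variance_of_integral_eq_zero aemeasurable_id' integral_id_gaussianReal]
  exact variance_fun_id_gaussianReal

theorem expectation_soft_threshold_sq_le (t : ℝ) (ht : 0 < t) :
    ∫ x, (softThreshold t x) ^ 2 ∂(gaussianReal 0 1) ≤ Real.exp (-t ^ 2 / 2) := by
  have hmoment := integrable_gaussianPDFReal_mul_sq one_ne_zero
  have hpointwise := gaussianPDFReal_mul_sq_softThreshold_le ht.le 1
  simp only [NNReal.coe_one, mul_one] at hpointwise
  calc ∫ x, softThreshold t x ^ 2 ∂gaussianReal 0 1
      = ∫ x, gaussianPDFReal 0 1 x * softThreshold t x ^ 2 :=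
        integral_gaussianReal_eq_integral_smul one_ne_zero
    _ ≤ ∫ x, exp (-t ^ 2 / 2) *
          (gaussianPDFReal 0 1 (softThreshold t x) * softThreshold t x ^ 2) :=
        integral_mono_of_nonneg (.of_forall fun x ↦ by positivity [gaussianPDFReal_nonneg 0 1 x])
          ((hmoment.comp_softThreshold ht.le (by simp)).const_mul _) (.of_forall hpointwise)
    _ = exp (-t ^ 2 / 2) := by
        rw [integral_const_mul, integral_comp_softThreshold ht.le hmoment (by simp),
          integral_gaussianPDFReal_mul_sq one_ne_zero, NNReal.coe_one, mul_one]
end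
end

section
/- Let 0 < ρ < 1, 1 ≤ s ≤ p, and T_{ρ,s} = {u ∈ ℝ^p : ‖u_S‖₂ ≥ (ρ/√s)‖u_{S^c}‖₁ for some S ⊂ {1,…,p} with #S = s}. Then T_{ρ,s} ∩ B₂^p ⊂ √(1+(1+ρ^{−1})²) · D, where D = conv{x ∈ S^{p−1} : x has at most s nonzero entries}. -/
/-!
The scaled hull `c • D` is compact and convex, so by Hahn–Banach it suffices to compare the values
of every linear functional `⟨·, w⟩`. Its maximum over `D` is `‖w_T‖₂`, where `T` carries the `s`
largest `|w i|`, attained at `w_T / ‖w_T‖₂`. Split `⟨u, w⟩` over `S`, `Sᶜ ∩ T` and `Sᶜ \ T`: by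
Cauchy–Schwarz the first two pieces are at most `‖u_S‖₂ ‖w_T‖₂` and `‖u_{Sᶜ}‖₂ ‖w_T‖₂`, while on
the last one `|w i| ≤ ‖w_T‖₂ / √s`, so the cone condition bounds it by `ρ⁻¹ ‖u_S‖₂ ‖w_T‖₂`.
Finally `(1 + ρ⁻¹) a + b ≤ √(1 + (1 + ρ⁻¹)²)` whenever `a² + b² ≤ 1`.
-/

open Pointwise

noncomputable section

def l1S {n : ℕ} (v : Fin n → ℝ) (Λ : Finset (Fin n)) : ℝ := ∑ i ∈ Λ, |v i|

def l2 {n : ℕ} (v : Fin n → ℝ) : ℝ := Real.sqrt (∑ i, (v i) ^ 2)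

def l2S {n : ℕ} (v : Fin n → ℝ) (Λ : Finset (Fin n)) : ℝ :=
  Real.sqrt (∑ i ∈ Λ, (v i) ^ 2)

def sparseHull (p s : ℕ) : Set (Fin p → ℝ) :=
  convexHull ℝ {x : Fin p → ℝ |
    l2 x = 1 ∧ (Finset.univ.filter (fun i => x i ≠ 0)).card ≤ s}

open Finset

theorem IsCompact.convexHull_of_finiteDimensional {E : Type*} [AddCommGroup E] [Module ℝ E]
    [TopologicalSpace E] [ContinuousAdd E] [ContinuousSMul ℝ E] [FiniteDimensional ℝ E]
    {K : Set E} (hK : IsCompact K) : IsCompact (convexHull ℝ K) := by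
  rcases K.eq_empty_or_nonempty with rfl | ⟨y₀, hy₀⟩
  · simp
  set n := Module.finrank ℝ E + 1
  let Φ : (Fin n → ℝ) × (Fin n → E) → E := fun q => ∑ i, q.1 i • q.2 i
  have hΦ : Continuous Φ := by fun_prop
  suffices convexHull ℝ K = Φ '' (stdSimplex ℝ (Fin n) ×ˢ Set.univ.pi fun _ => K) by
    rw [this]
    exact ((isCompact_stdSimplex _ _).prod (isCompact_univ_pi fun _ => hK)).image hΦ
  refine Set.Subset.antisymm (fun x hx => ?_) ?_
  · -- Carathéodory: `x` is a convex combination of at most `n` points of `K`; pad with `y₀`.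
    obtain ⟨ι, _, z, w, hzK, hz, hw0, hw1, rfl⟩ := eq_pos_convex_span_of_mem_convexHull hx
    have hcard : Fintype.card ι ≤ Fintype.card (Fin n) := by
      simpa [n] using hz.card_le_finrank_succ.trans
        (Nat.succ_le_succ (Submodule.finrank_le _))
    obtain ⟨e⟩ := Function.Embedding.nonempty_of_card_le hcard
    set t := Function.extend e w 0
    set y := Function.extend e z fun _ => y₀
    have ht (j : ι) : t (e j) = w j := e.injective.extend_apply _ _ j
    have hy (j : ι) : y (e j) = z j := e.injective.extend_apply _ _ j
    have ht' (i : Fin n) (hi : i ∉ Set.range e) : t i = 0 :=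
      Function.extend_apply' _ _ i (by simpa using hi)
    have hy' (i : Fin n) (hi : i ∉ Set.range e) : y i = y₀ :=
      Function.extend_apply' _ _ i (by simpa using hi)
    refine ⟨(t, y), ⟨⟨fun i => ?_, ?_⟩, fun i _ => ?_⟩, ?_⟩
    · change 0 ≤ t i
      by_cases hi : i ∈ Set.range e
      · obtain ⟨j, rfl⟩ := hi
        exact (ht j).symm ▸ (hw0 j).le
      · exact (ht' i hi).ge
    · rw [← hw1]
      exact (Fintype.sum_of_injective e e.injective _ _ ht' fun j => (ht j).symm).symm
    · change y i ∈ K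
      by_cases hi : i ∈ Set.range e
      · obtain ⟨j, rfl⟩ := hi
        exact (hy j).symm ▸ hzK (Set.mem_range_self j)
      · exact (hy' i hi).symm ▸ hy₀
    · exact (Fintype.sum_of_injective e e.injective _ _
        (fun i hi => by simp [ht' i hi]) fun j => by simp [ht, hy]).symm
  · rintro _ ⟨⟨t, y⟩, ⟨⟨ht0, ht1⟩, hyK⟩, rfl⟩
    exact (convex_convexHull ℝ K).sum_mem (fun i _ => ht0 i) ht1
      fun i _ => subset_convexHull ℝ K (hyK i (Set.mem_univ i))

theorem Finset.exists_card_eq_forall_sum_le {ι M : Type*} [Fintype ι] [DecidableEq ι]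
    [AddCommMonoid M] [LinearOrder M] [IsOrderedCancelAddMonoid M] (f : ι → M) {s : ℕ}
    (hs : s ≤ Fintype.card ι) :
    ∃ T : Finset ι, T.card = s ∧ (∀ S : Finset ι, S.card = s → ∑ i ∈ S, f i ≤ ∑ i ∈ T, f i) ∧
      ∀ j ∉ T, ∀ i ∈ T, f j ≤ f i := by
  obtain ⟨T, hTmem, hTmax⟩ := exists_max_image (univ.powersetCard s) (fun S => ∑ i ∈ S, f i)
    (powersetCard_nonempty.2 (by simpa using hs))
  have hT : T.card = s := (mem_powersetCard.1 hTmem).2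
  have hmax (S : Finset ι) (hS : S.card = s) : ∑ i ∈ S, f i ≤ ∑ i ∈ T, f i :=
    hTmax S (mem_powersetCard.2 ⟨subset_univ _, hS⟩)
  refine ⟨T, hT, hmax, fun j hj i hi => ?_⟩
  -- swapping `i` out of `T` for `j` cannot increase the sum
  have hjT : j ∉ T.erase i := fun h => hj (mem_of_mem_erase h)
  have hswap := hmax (insert j (T.erase i)) (by
    rw [card_insert_of_notMem hjT, card_erase_of_mem hi, hT]
    have := card_pos.2 ⟨i, hi⟩
    omega)
  rw [sum_insert hjT, ← add_sum_erase T f hi] at hswap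
  exact le_of_add_le_add_right hswap

section Norms

variable {p : ℕ}

theorem l2_eq_l2S_univ (v : Fin p → ℝ) : l2 v = l2S v univ := rfl

theorem l2S_sq (v : Fin p → ℝ) (A : Finset (Fin p)) : l2S v A ^ 2 = ∑ i ∈ A, v i ^ 2 :=
  Real.sq_sqrt (sum_nonneg fun _ _ => sq_nonneg _)

theorem l2S_mono (v : Fin p → ℝ) {A B : Finset (Fin p)} (h : A ⊆ B) : l2S v A ≤ l2S v B :=
  Real.sqrt_le_sqrt (sum_le_sum_of_subset_of_nonneg h fun _ _ _ => sq_nonneg _)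

theorem l1S_mono (v : Fin p → ℝ) {A B : Finset (Fin p)} (h : A ⊆ B) : l1S v A ≤ l1S v B :=
  sum_le_sum_of_subset_of_nonneg h fun _ _ _ => abs_nonneg _

theorem l2S_sq_add_l2S_compl_sq (v : Fin p → ℝ) (A : Finset (Fin p)) :
    l2S v A ^ 2 + l2S v Aᶜ ^ 2 = l2 v ^ 2 := by
  rw [l2S_sq, l2S_sq, sum_add_sum_compl, l2_eq_l2S_univ, l2S_sq]

theorem abs_le_l2 (v : Fin p → ℝ) (i : Fin p) : |v i| ≤ l2 v :=
  Real.abs_le_sqrt (single_le_sum (fun j _ => sq_nonneg (v j)) (mem_univ i))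

theorem sum_mul_le_l2S_mul_l2S (u w : Fin p → ℝ) (A : Finset (Fin p)) :
    ∑ i ∈ A, u i * w i ≤ l2S u A * l2S w A :=
  Real.sum_mul_le_sqrt_mul_sqrt _ _ _

end Norms

def sparseSphere (p s : ℕ) : Set (Fin p → ℝ) :=
  {x | l2 x = 1 ∧ (univ.filter fun i => x i ≠ 0).card ≤ s}

theorem sparseHull_eq_convexHull_sparseSphere (p s : ℕ) :
    sparseHull p s = convexHull ℝ (sparseSphere p s) := rfl

section SparseSphere

variable {p s : ℕ}

theorem isClosed_setOf_card_support_le (s : ℕ) :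
    IsClosed {x : Fin p → ℝ | (univ.filter fun i => x i ≠ 0).card ≤ s} := by
  have : {x : Fin p → ℝ | (univ.filter fun i => x i ≠ 0).card ≤ s} =
      ⋃ T ∈ {T : Finset (Fin p) | T.card ≤ s}, ⋂ i ∈ Tᶜ, {x | x i = 0} := by
    ext x
    simp only [Set.mem_ofPred_eq, Set.mem_iUnion, Set.mem_iInter, mem_compl, exists_prop]
    refine ⟨fun hx => ⟨_, hx, fun i hi => by simpa using hi⟩, fun ⟨T, hT, hxT⟩ => ?_⟩
    refine (card_le_card fun i hi => ?_).trans hT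
    by_contra hiT
    exact (mem_filter.1 hi).2 (hxT i hiT)
  rw [this]
  exact (Set.toFinite _).isClosed_biUnion fun T _ =>
    isClosed_biInter fun i _ => isClosed_eq (continuous_apply i) continuous_const

theorem isCompact_sparseSphere (p s : ℕ) : IsCompact (sparseSphere p s) := by
  have hclosed : IsClosed (sparseSphere p s) :=
    (isClosed_eq (by unfold l2; fun_prop) continuous_const).inter
      (isClosed_setOf_card_support_le s)
  refine (isCompact_closedBall (0 : Fin p → ℝ) 1).of_isClosed_subset hclosed fun x hx => ?_
  rw [mem_closedBall_zero_iff, pi_norm_le_iff_of_nonneg zero_le_one]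
  exact fun i => hx.1 ▸ abs_le_l2 x i

theorem single_mem_sparseSphere (hs : 1 ≤ s) (i : Fin p) :
    (Pi.single i 1 : Fin p → ℝ) ∈ sparseSphere p s := by
  refine ⟨?_, le_trans (card_le_one.2 fun j hj k hk => ?_) hs⟩
  · simp [l2, Pi.single_apply]
  · simp only [mem_filter, Pi.single_apply] at hj hk
    grind

theorem exists_mem_sparseSphere_sum_mul_eq (w : Fin p → ℝ) {T : Finset (Fin p)}
    (hT : T.Nonempty) (hTs : T.card ≤ s) :
    ∃ x ∈ sparseSphere p s, ∑ i, x i * w i = l2S w T := by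
  by_cases hn : l2S w T = 0
  · obtain ⟨i, hi⟩ := hT
    have hwi : w i = 0 := by
      have := single_le_sum (fun j _ => sq_nonneg (w j)) hi
      rw [← l2S_sq, hn] at this
      nlinarith
    refine ⟨Pi.single i 1, single_mem_sparseSphere ((card_pos.2 ⟨i, hi⟩).trans_le hTs) i, ?_⟩
    simp [Pi.single_apply, hwi, hn]
  · refine ⟨fun i => if i ∈ T then w i / l2S w T else 0, ⟨?_, ?_⟩, ?_⟩
    · simp [l2, ite_pow, div_pow, ← sum_div, ← l2S_sq, hn]
    · refine (card_le_card fun i hi => ?_).trans hTs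
      by_contra hiT
      simp [hiT] at hi
    · simp [ite_mul, div_mul_eq_mul_div, ← sum_div, ← sq, ← l2S_sq]
      rw [sq, mul_div_cancel_right₀ _ hn]

end SparseSphere

theorem mul_add_le_sqrt_one_add_sq {k a b : ℝ} (h : a ^ 2 + b ^ 2 ≤ 1) :
    k * a + b ≤ √(1 + k ^ 2) :=
  (le_abs_self _).trans <| Real.abs_le_sqrt <| by nlinarith [sq_nonneg (a - k * b), sq_nonneg k]

section ConeEstimate

variable {p s : ℕ} {u w : Fin p → ℝ} {S T : Finset (Fin p)}

theorem sqrt_card_mul_sum_mul_le {A : Finset (Fin p)}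
    (hdom : ∀ j ∈ A, ∀ i ∈ T, w j ^ 2 ≤ w i ^ 2) :
    √T.card * ∑ j ∈ A, u j * w j ≤ l1S u A * l2S w T := by
  rw [mul_sum, l1S, sum_mul]
  refine sum_le_sum fun j hj => ?_
  have hwj : √T.card * |w j| ≤ l2S w T := by
    rw [← Real.sqrt_sq_eq_abs, ← Real.sqrt_mul (Nat.cast_nonneg _), l2S]
    exact Real.sqrt_le_sqrt (by simpa using sum_le_sum (hdom j hj))
  calc √T.card * (u j * w j) ≤ √T.card * |u j * w j| :=
        mul_le_mul_of_nonneg_left (le_abs_self _) (Real.sqrt_nonneg _)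
    _ = |u j| * (√T.card * |w j|) := by rw [abs_mul]; ring
    _ ≤ |u j| * l2S w T := mul_le_mul_of_nonneg_left hwj (abs_nonneg _)

theorem sum_mul_le_of_cone {ρ : ℝ} (hρ : 0 < ρ) (hs : 0 < s) (hT : T.card = s)
    (hcone : ρ / √s * l1S u Sᶜ ≤ l2S u S) (hST : l2S w S ≤ l2S w T)
    (hdom : ∀ j ∉ T, ∀ i ∈ T, w j ^ 2 ≤ w i ^ 2) :
    ∑ i, u i * w i ≤ ((1 + ρ⁻¹) * l2S u S + l2S u Sᶜ) * l2S w T := by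
  set a := l2S u S
  set b := l2S u Sᶜ
  set n := l2S w T
  have hn : 0 ≤ n := Real.sqrt_nonneg _
  have hsqrt : 0 < √(s : ℝ) := Real.sqrt_pos.2 (Nat.cast_pos.2 hs)
  have hsplit : ∑ i, u i * w i = ∑ i ∈ S, u i * w i +
      (∑ i ∈ Sᶜ.filter (· ∈ T), u i * w i + ∑ i ∈ Sᶜ.filter (· ∉ T), u i * w i) := by
    rw [sum_filter_add_sum_filter_not, sum_add_sum_compl]
  have hhead : ∑ i ∈ S, u i * w i ≤ a * n :=
    (sum_mul_le_l2S_mul_l2S u w S).trans (mul_le_mul_of_nonneg_left hST (Real.sqrt_nonneg _))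
  have hmid : ∑ i ∈ Sᶜ.filter (· ∈ T), u i * w i ≤ b * n :=
    (sum_mul_le_l2S_mul_l2S _ _ _).trans <| mul_le_mul (l2S_mono u (filter_subset _ _))
      (l2S_mono w fun i hi => (mem_filter.1 hi).2) (Real.sqrt_nonneg _) (Real.sqrt_nonneg _)
  have htail : ρ * ∑ i ∈ Sᶜ.filter (· ∉ T), u i * w i ≤ a * n := by
    have hl1 : ρ * l1S u Sᶜ ≤ √s * a := by
      calc ρ * l1S u Sᶜ = √s * (ρ / √s * l1S u Sᶜ) := by field_simp
        _ ≤ √s * a := by gcongr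
    have key : √s * ∑ i ∈ Sᶜ.filter (· ∉ T), u i * w i ≤ l1S u (Sᶜ.filter (· ∉ T)) * n :=
      hT ▸ sqrt_card_mul_sum_mul_le fun j hj => hdom j (mem_filter.1 hj).2
    refine le_of_mul_le_mul_left ?_ hsqrt
    calc √s * (ρ * ∑ i ∈ Sᶜ.filter (· ∉ T), u i * w i)
        = ρ * (√s * ∑ i ∈ Sᶜ.filter (· ∉ T), u i * w i) := by ring
      _ ≤ ρ * (l1S u Sᶜ * n) := mul_le_mul_of_nonneg_left
        (key.trans (mul_le_mul_of_nonneg_right (l1S_mono u (filter_subset _ _)) hn)) hρ.le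
      _ ≤ √s * a * n := by rw [← mul_assoc]; gcongr
      _ = √s * (a * n) := by ring
  calc ∑ i, u i * w i ≤ a * n + (b * n + ρ⁻¹ * (a * n)) := by
        rw [hsplit]
        gcongr
        calc _ = ρ⁻¹ * (ρ * ∑ i ∈ Sᶜ.filter (· ∉ T), u i * w i) := by field_simp
          _ ≤ ρ⁻¹ * (a * n) := by gcongr
    _ = ((1 + ρ⁻¹) * a + b) * n := by ring

end ConeEstimate

theorem T_rho_s_subset_scaled_hull_general {p s : ℕ} (hs : 1 ≤ s)
    (ρ : ℝ) (hρ0 : 0 < ρ) :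
    {u : Fin p → ℝ | ∃ S : Finset (Fin p), S.card = s ∧
        ρ / Real.sqrt s * l1S u Sᶜ ≤ l2S u S} ∩ {u | l2 u ≤ 1} ⊆
      (Real.sqrt (1 + (1 + ρ⁻¹) ^ 2)) • (sparseHull p s : Set (Fin p → ℝ)) := by
  rintro u ⟨⟨S, hS, hcone⟩, hu⟩
  rw [sparseHull_eq_convexHull_sparseSphere]
  set c := √(1 + (1 + ρ⁻¹) ^ 2)
  have hclosed : IsClosed (c • convexHull ℝ (sparseSphere p s)) :=
    ((isCompact_sparseSphere p s).convexHull_of_finiteDimensional.smul c).isClosed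
  refine (iInter_halfSpaces_eq ((convex_convexHull ℝ _).smul c) hclosed).subset
    (Set.mem_iInter.2 fun f => ?_)
  set w : Fin p → ℝ := fun i => f fun j => if i = j then 1 else 0
  have hf (v : Fin p → ℝ) : f v = ∑ i, v i * w i := f.toLinearMap.pi_apply_eq_sum_univ v
  obtain ⟨T, hT, hmax, hdom⟩ :=
    exists_card_eq_forall_sum_le (fun i => w i ^ 2) (hS ▸ S.card_le_univ)
  obtain ⟨x, hx, hxw⟩ := exists_mem_sparseSphere_sum_mul_eq w (card_pos.1 (hT ▸ hs)) hT.le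
  refine ⟨c • x, Set.smul_mem_smul_set (subset_convexHull ℝ _ hx), ?_⟩
  rw [map_smul, smul_eq_mul, hf, hf, hxw]
  calc ∑ i, u i * w i ≤ ((1 + ρ⁻¹) * l2S u S + l2S u Sᶜ) * l2S w T :=
        sum_mul_le_of_cone hρ0 hs hT hcone (Real.sqrt_le_sqrt (hmax S hS)) hdom
    _ ≤ c * l2S w T := by
        refine mul_le_mul_of_nonneg_right (mul_add_le_sqrt_one_add_sq ?_) (Real.sqrt_nonneg _)
        rw [l2S_sq_add_l2S_compl_sq]
        exact pow_le_one₀ (Real.sqrt_nonneg _) hu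

theorem T_rho_s_subset_scaled_hull {p s : ℕ} (hs : 1 ≤ s) (hsp : s ≤ p)
    (ρ : ℝ) (hρ0 : 0 < ρ) (hρ1 : ρ < 1) :
    {u : Fin p → ℝ | ∃ S : Finset (Fin p), S.card = s ∧
        ρ / Real.sqrt s * l1S u Sᶜ ≤ l2S u S} ∩ {u | l2 u ≤ 1} ⊆
      (Real.sqrt (1 + (1 + ρ⁻¹) ^ 2)) • (sparseHull p s : Set (Fin p → ℝ)) :=
  T_rho_s_subset_scaled_hull_general hs ρ hρ0
end
end
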